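/- Let G be a finitely generated group whose word problem WP(G) is recursively enumerable, let X ⊆ A_X^G be an effectively closed subshift, and let φ : X → Y be a factor code onto a subshift Y ⊆ A_Y^G. Then Y is effectively closed. Consequently, for recursively presented groups the class of effectively closed subshifts is closed under factors. -/

import Mathlib

/-!
By the Curtis–Hedlund–Lyndon argument (compactness of `X`), `φ` is a sliding block code: a
local rule `Φ` read through finitely many words `W`. A subshift is cut out by the pattern codings
it avoids at the origin, so it suffices to enumerate the codings avoided by `φ '' X`. Call `c`
certified at stage `n` if every assignment of symbols to the first `n` words that respects the
word relations and the forbidden codings of `X` enumerated by stage `n` contradicts `c` through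
`Φ`. Since `WP S` and the codings of `X` are r.e., certification is primitive recursive. It is
sound, because restrictions of points of `X` are admissible, and complete by compactness: if `c`
were never certified, an ultrafilter limit of admissible assignments not contradicting `c` would
be a point of `X` whose image contains `c` at the origin.
-/

open scoped Classical

noncomputable section

namespace SDG

/-! ### Relativized computability -/

/-- Partial recursive functions `ℕ →. ℕ` relative to an oracle `O`. -/
inductive NatPartrecIn (O : ℕ →. ℕ) : (ℕ →. ℕ) → Prop
  | oracle : NatPartrecIn O O
  | zero : NatPartrecIn O (pure 0)
  | succ : NatPartrecIn O Nat.succ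
  | left : NatPartrecIn O ↑fun n : ℕ => n.unpair.1
  | right : NatPartrecIn O ↑fun n : ℕ => n.unpair.2
  | pair {f g} : NatPartrecIn O f → NatPartrecIn O g →
      NatPartrecIn O fun n => Nat.pair <$> f n <*> g n
  | comp {f g} : NatPartrecIn O f → NatPartrecIn O g →
      NatPartrecIn O fun n => g n >>= f
  | prec {f g} : NatPartrecIn O f → NatPartrecIn O g →
      NatPartrecIn O (Nat.unpaired fun a n =>
        n.rec (f a) fun y IH => do let i ← IH; g (Nat.pair a (Nat.pair y i)))
  | rfind {f} : NatPartrecIn O f →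
      NatPartrecIn O fun a => Nat.rfind fun n => (fun m => m = 0) <$> f (Nat.pair a n)

/-- A partial function between `Primcodable` types is partial recursive in the oracle `O`. -/
def PartrecIn (O : ℕ →. ℕ) {α σ : Type} [Primcodable α] [Primcodable σ] (f : α →. σ) : Prop :=
  NatPartrecIn O fun n =>
    Part.bind (Part.ofOption (Encodable.decode (α := α) n)) fun a => (f a).map Encodable.encode

/-- A predicate is recursively enumerable in the oracle `O` if it is the domain of a partial
function recursive in `O`. -/
def RePredIn (O : ℕ →. ℕ) {α : Type} [Primcodable α] (p : α → Prop) : Prop :=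
  PartrecIn O fun a => Part.assert (p a) fun _ => Part.some ()

/-- The characteristic function (as an oracle `ℕ →. ℕ`) of a set `L` of elements of a
`Primcodable` type: on the code of an element of `L` it answers `1`, elsewhere `0`. -/
def charFun {α : Type} [Primcodable α] (L : Set α) : ℕ →. ℕ :=
  fun n => Part.some (if ∃ a ∈ L, Encodable.encode a = n then 1 else 0)

/-! ### Finitely generated groups, words and pattern codings -/

variable {G : Type} [Group G]

/-- The group element represented by a word over the generators `S`. -/
def wordEval {k : ℕ} (S : Fin k → G) (w : List (Fin k)) : G :=
  (w.map S).prod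

/-- `S : Fin k → G` is a finite symmetric generating family containing the identity. -/
def IsGenData {k : ℕ} (S : Fin k → G) : Prop :=
  (∃ i, S i = 1) ∧ (∀ i, ∃ j, S j = (S i)⁻¹) ∧ Subgroup.closure (Set.range S) = ⊤

/-- The word problem of `G` with respect to the generating family `S`. -/
def WP {k : ℕ} (S : Fin k → G) : Set (List (Fin k)) :=
  {w | wordEval S w = 1}

/-- A pattern coding over the alphabet `A`: a finite list of pairs (word, symbol). -/
abbrev PatternCoding (k : ℕ) (A : Type) : Type :=
  List (List (Fin k) × A)

/-- The subshift defined by a set `C` of pattern codings: configurations in which no translate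
of a coded pattern occurs. -/
def XC {k : ℕ} (S : Fin k → G) {A : Type} (C : Set (PatternCoding k A)) : Set (G → A) :=
  {x | ¬ ∃ (g : G) (c : PatternCoding k A), c ∈ C ∧ ∀ p ∈ c, x (g * wordEval S p.1) = p.2}

/-- A set is effectively closed if it is defined by a recursively enumerable set of
pattern codings. -/
def EffectivelyClosed {k : ℕ} (S : Fin k → G) {A : Type} [Primcodable A]
    (X : Set (G → A)) : Prop :=
  ∃ C : Set (PatternCoding k A), REPred (· ∈ C) ∧ X = XC S C

/-- A set is `G`-effectively closed if it is defined by a set of pattern codings which is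
recursively enumerable with oracle the word problem of `G`. -/
def GEffectivelyClosed {k : ℕ} (S : Fin k → G) {A : Type} [Primcodable A]
    (X : Set (G → A)) : Prop :=
  ∃ C : Set (PatternCoding k A), RePredIn (charFun (WP S)) (· ∈ C) ∧ X = XC S C

/-- A pattern coding is consistent if words representing the same group element receive the
same symbol. -/
def Consistent {k : ℕ} (S : Fin k → G) {A : Type} (c : PatternCoding k A) : Prop :=
  ∀ p ∈ c, ∀ q ∈ c, wordEval S p.1 = wordEval S q.1 → p.2 = q.2

/-! ### Subshifts, SFTs, sofic subshifts -/

/-- `X ⊆ A^G` is a subshift: closed (for the product of the discrete topology) and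
shift-invariant. -/
def IsSubshift {A : Type} (X : Set (G → A)) : Prop :=
  (letI : TopologicalSpace A := ⊥; IsClosed X) ∧
    ∀ x ∈ X, ∀ g : G, (fun h => x (g⁻¹ * h)) ∈ X

/-- A pattern with finite support over the alphabet `A`. -/
structure Pattern (G : Type) (A : Type) where
  supp : Finset G
  val : (g : G) → g ∈ supp → A

/-- The pattern `p` occurs in the configuration `x` at position `g`. -/
def PatternOccurs {A : Type} (p : Pattern G A) (x : G → A) (g : G) : Prop :=
  ∀ (h : G) (hh : h ∈ p.supp), x (g * h) = p.val h hh

/-- The subshift defined by a set of forbidden patterns. -/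
def XPat {A : Type} (Fs : Set (Pattern G A)) : Set (G → A) :=
  {x | ¬ ∃ (g : G) (p : Pattern G A), p ∈ Fs ∧ PatternOccurs p x g}

/-- A subshift of finite type: defined by a finite set of forbidden patterns. -/
def IsSFT {A : Type} (X : Set (G → A)) : Prop :=
  ∃ Fs : Set (Pattern G A), Fs.Finite ∧ X = XPat Fs

/-- A witness that `X` is sofic: an SFT `Y` over a finite alphabet `B` together with a factor
code (continuous shift-equivariant surjection) from `Y` onto `X`. -/
structure SoficVia (G : Type) [Group G] {A : Type} (X : Set (G → A)) : Type 1 where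
  B : Type
  finB : Fintype B
  Y : Set (G → B)
  sft : IsSFT Y
  subY : IsSubshift Y
  phi : (G → B) → (G → A)
  cont : letI : TopologicalSpace B := ⊥
         letI : TopologicalSpace A := ⊥
         ContinuousOn phi Y
  equiv : ∀ y ∈ Y, ∀ g : G, phi (fun h => y (g⁻¹ * h)) = fun h => phi y (g⁻¹ * h)
  image : phi '' Y = X

/-- A subshift is sofic if it is the image of an SFT under a factor code. -/
def IsSofic {A : Type} (X : Set (G → A)) : Prop :=
  Nonempty (SoficVia G X)

/-- A factor code from `X` onto `Y`: continuous (discrete product topologies),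
shift-equivariant and surjective. -/
def FactorCode {A B : Type} (X : Set (G → A)) (Y : Set (G → B))
    (φ : (G → A) → (G → B)) : Prop :=
  (letI : TopologicalSpace A := ⊥
   letI : TopologicalSpace B := ⊥
   ContinuousOn φ X) ∧
  (∀ x ∈ X, ∀ g : G, φ (fun h => x (g⁻¹ * h)) = fun h => φ x (g⁻¹ * h)) ∧
  φ '' X = Y

/-- Two subshifts are conjugate if there is a shift-equivariant homeomorphism between them. -/
def Conjugate {A B : Type} (X : Set (G → A)) (Y : Set (G → B)) : Prop :=
  ∃ (φ : (G → A) → (G → B)) (ψ : (G → B) → (G → A)),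
    FactorCode X Y φ ∧ FactorCode Y X ψ ∧
    (∀ x ∈ X, ψ (φ x) = x) ∧ (∀ y ∈ Y, φ (ψ y) = y)

/-- The one-or-less subshift: configurations with at most one occurrence of the symbol `1`
(represented by `true`). -/
def Xle1 (G : Type) : Set (G → Bool) :=
  {x | ∀ g h : G, x g = true → x h = true → g = h}

/-! ### `G`-machines -/

/-- A `G`-machine: finite set of states, finite tape alphabet `A` with a blank symbol, initial
state, accepting states, and a transition function moving with the generators `Fin k`. -/
structure GMachine (k : ℕ) (A : Type) : Type 1 where
  Q : Type
  finQ : Fintype Q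
  blank : A
  q0 : Q
  QF : Set Q
  delta : A × Q → A × Q × Fin k

/-- One step of a `G`-machine in the fixed head model: if `δ(x(1),q) = (a,q',s)` then the new
configuration is `σ_{s⁻¹} x̃` where `x̃` is `x` with the value at `1` replaced by `a`. -/
def GMachine.step {k : ℕ} {A : Type} (M : GMachine k A) (S : Fin k → G) :
    (G → A) × M.Q → (G → A) × M.Q :=
  fun xq =>
    let t := M.delta (xq.1 1, xq.2)
    let xt : G → A := Function.update xq.1 1 t.1
    (fun h => xt (S t.2.2 * h), t.2.1)

/-- The configuration which equals the pattern `p` on its support and `blank` elsewhere. -/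
def Pattern.config {A : Type} (p : Pattern G A) (blank : A) : G → A :=
  fun g => if h : g ∈ p.supp then p.val g h else blank

/-- The `G`-machine `M` accepts the pattern `p` if starting from the configuration `x^p` in the
initial state it eventually reaches an accepting state. -/
def GMachine.Accepts {k : ℕ} {A : Type} (M : GMachine k A) (S : Fin k → G)
    (p : Pattern G A) : Prop :=
  ∃ n : ℕ, ((M.step S)^[n] (p.config M.blank, M.q0)).2 ∈ M.QF

/-- A set of patterns is `G`-recursively enumerable if some `G`-machine accepts exactly its
elements. -/
def GRecEnum {k : ℕ} (S : Fin k → G) {A : Type} (L : Set (Pattern G A)) : Prop :=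
  ∃ M : GMachine k A, ∀ p : Pattern G A, M.Accepts S p ↔ p ∈ L

/-- The consistent pattern coding `c` defines the pattern `p`. -/
def Defines {k : ℕ} (S : Fin k → G) {A : Type} (c : PatternCoding k A)
    (p : Pattern G A) : Prop :=
  (∀ g : G, g ∈ p.supp ↔ ∃ q ∈ c, wordEval S q.1 = g) ∧
  ∀ q ∈ c, ∀ hg : wordEval S q.1 ∈ p.supp, p.val (wordEval S q.1) hg = q.2

/-- `p(C)`: the set of patterns defined by the consistent pattern codings of `C`. -/
def patternsOf {k : ℕ} (S : Fin k → G) {A : Type} (C : Set (PatternCoding k A)) :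
    Set (Pattern G A) :=
  {p | ∃ c ∈ C, Consistent S c ∧ Defines S c p}

/-- A set of patterns is closed by extensions if any pattern extending a pattern of the set
also belongs to the set. -/
def ClosedByExtensions {A : Type} (L : Set (Pattern G A)) : Prop :=
  ∀ (p₁ p₂ : Pattern G A) (hsub : p₁.supp ⊆ p₂.supp),
    (∀ (g : G) (hg : g ∈ p₁.supp), p₂.val g (hsub hg) = p₁.val g hg) →
    p₁ ∈ L → p₂ ∈ L

/-! ### Balls, ends, amenability -/

/-- The ball of radius `n` in the word metric given by `S`. -/
def ballS {k : ℕ} (S : Fin k → G) (n : ℕ) : Set G :=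
  {x | ∃ w : List (Fin k), w.length ≤ n ∧ wordEval S w = x}

/-- Adjacency in the Cayley graph restricted to the set `V`. -/
def Adj {k : ℕ} (S : Fin k → G) (V : Set G) (a b : G) : Prop :=
  a ∈ V ∧ b ∈ V ∧ ∃ i, a * S i = b

/-- Reachability inside `V` in the Cayley graph of `(G,S)`. -/
def Reach {k : ℕ} (S : Fin k → G) (V : Set G) (a b : G) : Prop :=
  Relation.ReflTransGen (Adj S V) a b

/-- `G` has at least two ends: for some `n`, the complement of the ball of radius `n` in the
Cayley graph has at least two infinite connected components. -/
def HasTwoOrMoreEnds {k : ℕ} (S : Fin k → G) : Prop :=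
  ∃ (n : ℕ) (x y : G), x ∉ ballS S n ∧ y ∉ ballS S n ∧
    {z | Reach S (ballS S n)ᶜ x z}.Infinite ∧
    {z | Reach S (ballS S n)ᶜ y z}.Infinite ∧
    ¬ Reach S (ballS S n)ᶜ x y

/-- The Følner condition: `G` is amenable. -/
def FolnerAmenable (G : Type) [Group G] : Prop :=
  ∀ (K : Finset G) (ε : ℝ), 0 < ε →
    ∃ F : Finset G, F.Nonempty ∧ ∀ k ∈ K,
      ((F \ F.image (fun x => x * k)).card : ℝ) < ε * F.card

/-! ### `G × ℤ`, presentations, hardness and the domino problems -/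

/-- Generators of `G × ℤ`: the generators of `G` paired with `0`, together with `(1,±1)`. -/
def prodGens {k : ℕ} (S : Fin k → G) : Fin (k + 2) → G × Multiplicative ℤ :=
  fun i =>
    if h : (i : ℕ) < k then (S ⟨i, h⟩, 1)
    else if (i : ℕ) = k then (1, Multiplicative.ofAdd 1)
    else (1, Multiplicative.ofAdd (-1))

/-- The element of the free group over the generator indices represented by a word. -/
def freeWord {k : ℕ} (w : List (Fin k)) : FreeGroup (Fin k) :=
  (w.map FreeGroup.of).prod

/-- `G` is recursively presented with respect to `S`: there is a recursively enumerable set of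
relators (words over the generators) whose normal closure in the free group over the
generator indices is the kernel of the evaluation map. -/
def RecursivelyPresented {k : ℕ} (S : Fin k → G) : Prop :=
  ∃ R : Set (List (Fin k)), REPred (· ∈ R) ∧
    MonoidHom.ker (FreeGroup.lift S) = Subgroup.normalClosure (freeWord '' R)

/-- `L` is hard for the class of predicates recursively enumerable in the oracle `O`
(equivalently, hard for the halting problem of machines with oracle `O`): every
such predicate many-one reduces to `L` via a computable function. -/
def OracleREHard {α : Type} [Primcodable α] (O : ℕ →. ℕ) (L : Set α) : Prop :=
  ∀ p : ℕ → Prop, RePredIn O p → ∃ f : ℕ → α, Computable f ∧ ∀ n, p n ↔ f n ∈ L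

/-- The domino problem of `(K,T)`: pairs `(N, F)` of an alphabet size and a finite list of
pattern codings over `ℕ` such that no configuration with symbols `< N` avoids `F`. -/
def DP {K : Type} [Group K] {m : ℕ} (T : Fin m → K) : Set (ℕ × List (PatternCoding m ℕ)) :=
  {q | ¬ ∃ x : K → ℕ, (∀ g, x g < q.1) ∧ x ∈ XC T {c | c ∈ q.2}}

/-- The origin constrained domino problem of `(K,T)`: triples `((N,a),F)` such that no
configuration with symbols `< N` and the symbol `a` at the origin avoids `F`. -/
def OCDP {K : Type} [Group K] {m : ℕ} (T : Fin m → K) :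
    Set ((ℕ × ℕ) × List (PatternCoding m ℕ)) :=
  {q | ¬ ∃ x : K → ℕ, (∀ g, x g < q.1.1) ∧ x 1 = q.1.2 ∧ x ∈ XC T {c | c ∈ q.2}}



section Topology

variable {ι A B : Type*} [TopologicalSpace A]

theorem _root_.IsCompact.exists_finset_eq_of_continuousOn [DiscreteTopology A] [TopologicalSpace B]
    [DiscreteTopology B] {X : Set (ι → A)} (hX : IsCompact X) {ψ : (ι → A) → B}
    (hψ : ContinuousOn ψ X) :
    ∃ F : Finset ι, ∀ x ∈ X, ∀ y ∈ X, (∀ i ∈ F, x i = y i) → ψ x = ψ y := by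
  set D := (X ×ˢ X) ∩ (fun p => (ψ p.1, ψ p.2)) ⁻¹' {q | q.1 ≠ q.2}
  have hDclosed : IsClosed D :=
    ((hψ.comp continuousOn_fst fun _ h => h.1).prodMk
      (hψ.comp continuousOn_snd fun _ h => h.2)).preimage_isClosed_of_isClosed
      (hX.prod hX).isClosed (isClosed_discrete _)
  have hD : IsCompact D := (hX.prod hX).of_isClosed_subset hDclosed Set.inter_subset_left
  -- `D` is compact and misses the diagonal, the directed intersection of the closed sets
  -- of pairs agreeing on `F`; so some of these sets already misses `D`.
  obtain ⟨F, hF⟩ := hD.elim_directed_family_closed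
    (fun F : Finset ι => {p | ∀ i ∈ F, p.1 i = p.2 i})
    (fun F => by
      simp only [Set.ofPred_forall]
      exact isClosed_biInter fun i _ => isClosed_eq (by fun_prop) (by fun_prop))
    (by
      refine Set.eq_empty_of_forall_notMem fun p ⟨⟨_, hne⟩, hagree⟩ => hne ?_
      have : p.1 = p.2 :=
        funext fun i => Set.mem_iInter.1 hagree {i} i (Finset.mem_singleton_self i)
      simp [this])
    (Antitone.directed_ge fun F F' h p hp i hi => hp i (Finset.mem_of_subset h hi))
  refine ⟨F, fun x hx y hy hxy => ?_⟩
  by_contra hne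
  exact Set.eq_empty_iff_forall_notMem.1 hF (x, y) ⟨⟨⟨hx, hy⟩, hne⟩, hxy⟩

theorem _root_.IsClosed.exists_finset_ne_of_notMem {Y : Set (ι → A)} (hY : IsClosed Y) {z : ι → A}
    (hz : z ∉ Y) : ∃ F : Finset ι, ∀ y ∈ Y, ∃ i ∈ F, y i ≠ z i := by
  obtain ⟨F, u, hu, hsub⟩ := isOpen_pi_iff.1 hY.isOpen_compl z hz
  refine ⟨F, fun y hy => ?_⟩
  by_contra! h
  refine hsub (fun i hi => ?_) hy
  rw [h i hi]
  exact (hu i hi).2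

end Topology

section Words

variable {k : ℕ} (S : Fin k → G)

theorem wordEval_append (v w : List (Fin k)) :
    wordEval S (v ++ w) = wordEval S v * wordEval S w := by
  simp [wordEval]

theorem wordEval_reverse_map {inv : Fin k → Fin k} (hinv : ∀ i, S (inv i) = (S i)⁻¹)
    (w : List (Fin k)) : wordEval S (w.reverse.map inv) = (wordEval S w)⁻¹ := by
  simp [wordEval, List.prod_inv_reverse, List.map_reverse, Function.comp_def, hinv]

variable {S}

theorem IsGenData.exists_wordEval_eq (hS : IsGenData S) (g : G) :
    ∃ w : List (Fin k), wordEval S w = g := by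
  obtain ⟨-, hsymm, hgen⟩ := hS
  choose inv hinv using hsymm
  have hg : g ∈ Subgroup.closure (Set.range S) := hgen ▸ Subgroup.mem_top g
  induction hg using Subgroup.closure_induction with
  | mem x hx =>
    obtain ⟨i, rfl⟩ := hx
    exact ⟨[i], by simp [wordEval]⟩
  | one => exact ⟨[], rfl⟩
  | mul x y _ _ hx hy =>
    obtain ⟨v, rfl⟩ := hx
    obtain ⟨w, rfl⟩ := hy
    exact ⟨v ++ w, wordEval_append S v w⟩
  | inv x _ hx =>
    obtain ⟨w, rfl⟩ := hx
    exact ⟨w.reverse.map inv, wordEval_reverse_map S hinv w⟩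

theorem IsGenData.rePred_wordEval_eq (hS : IsGenData S) (hWP : REPred (· ∈ WP S)) :
    REPred fun p : List (Fin k) × List (Fin k) => wordEval S p.1 = wordEval S p.2 := by
  choose inv hinv using hS.2.1
  have hquot : Primrec fun p : List (Fin k) × List (Fin k) => p.1 ++ p.2.reverse.map inv :=
    Primrec.list_append.comp Primrec.fst
      (Primrec.list_map (Primrec.list_reverse.comp Primrec.snd)
        ((Primrec.dom_finite inv).comp Primrec.snd).to₂)
  refine REPred.of_eq (hWP.comp hquot.to_comp) fun p => ?_
  simp only [WP, Set.mem_ofPred_eq, wordEval_append, wordEval_reverse_map S hinv, mul_inv_eq_one]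

end Words

theorem _root_.List.Forall₂.exists_mem_of_mem_right {α β : Type*} {R : α → β → Prop}
    {l₁ : List α} {l₂ : List β} (h : List.Forall₂ R l₁ l₂) {b : β} (hb : b ∈ l₂) :
    ∃ a ∈ l₁, R a b := by
  induction h with
  | nil => simp at hb
  | cons hab _ ih =>
    rcases List.mem_cons.1 hb with rfl | hb
    · exact ⟨_, List.mem_cons_self, hab⟩
    · obtain ⟨a, ha, hr⟩ := ih hb
      exact ⟨a, List.mem_cons_of_mem _ ha, hr⟩

section Computability

open Encodable Primrec

variable {α β : Type} [Primcodable α] [Primcodable β]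

theorem _root_.PrimrecPred.imp {p q : α → Prop} (hp : PrimrecPred p) (hq : PrimrecPred q) :
    PrimrecPred fun a => p a → q a :=
  (hp.not.or hq).of_eq fun _ => imp_iff_not_or.symm

theorem _root_.PrimrecPred.forall_mem {f : α → List β} {R : α → β → Prop} (hf : Primrec f)
    (hR : PrimrecRel R) : PrimrecPred fun a => ∀ b ∈ f a, R a b :=
  hR.swap.forall_mem_list.comp hf Primrec.id

theorem _root_.PrimrecPred.exists_mem {f : α → List β} {R : α → β → Prop} (hf : Primrec f)
    (hR : PrimrecRel R) : PrimrecPred fun a => ∃ b ∈ f a, R a b :=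
  hR.swap.exists_mem_list.comp hf Primrec.id

theorem _root_.PrimrecPred.forall_of_finite [Finite β] {R : α → β → Prop}
    (hR : PrimrecRel R) : PrimrecPred fun a => ∀ b, R a b := by
  obtain ⟨l, -, hl⟩ := Finite.exists_univ_list β
  exact (PrimrecPred.forall_mem (Primrec.const l) hR).of_eq fun a => by simp [hl]

theorem _root_.PrimrecPred.exists_of_finite [Finite β] {R : α → β → Prop}
    (hR : PrimrecRel R) : PrimrecPred fun a => ∃ b, R a b := by
  obtain ⟨l, -, hl⟩ := Finite.exists_univ_list β
  exact (PrimrecPred.exists_mem (Primrec.const l) hR).of_eq fun a => by simp [hl]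

theorem _root_.PrimrecPred.mem {f : α → β} {g : α → List β} (hf : Primrec f)
    (hg : Primrec g) : PrimrecPred fun a => f a ∈ g a :=
  (PrimrecPred.exists_mem (R := fun a b => b = f a) hg
    (Primrec.eq.comp Primrec.snd (hf.comp Primrec.fst))).of_eq fun a => by simp

theorem primrec_sections : Primrec (@List.sections α) := by
  have h : Primrec fun L : List (List α) =>
      L.foldr (fun l acc => acc.flatMap fun s => l.map (· :: s)) [[]] :=
    list_foldr Primrec.id (const [[]])
      (list_flatMap (snd.comp snd)
        (list_map (fst.comp (snd.comp fst))
          (list_cons.comp snd (snd.comp fst)).to₂).to₂).to₂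
  refine h.of_eq fun L => ?_
  induction L with
  | nil => rfl
  | cons l L ih => simp [ih]

def enumUpTo (α : Type) [Primcodable α] (n : ℕ) : List α :=
  (List.range n).filterMap decode

theorem primrec_enumUpTo : Primrec (enumUpTo α) :=
  listFilterMap list_range (Primrec.decode.comp snd).to₂

theorem eventually_mem_enumUpTo (a : α) : ∀ᶠ n in Filter.atTop, a ∈ enumUpTo α n :=
  Filter.eventually_atTop.2 ⟨encode a + 1, fun _ hn =>
    List.mem_filterMap.2 ⟨encode a, List.mem_range.2 hn, encodek a⟩⟩

end Computability

section Stages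

open Encodable Primrec Nat.Partrec

variable {α : Type}

def IsStageApprox (p : α → Prop) (R : α → ℕ → Prop) : Prop :=
  (∀ a, Monotone (R a)) ∧ ∀ a, p a ↔ ∃ n, R a n

theorem IsStageApprox.of_stage {p : α → Prop} {R : α → ℕ → Prop} (h : IsStageApprox p R)
    {a : α} {n : ℕ} (hn : R a n) : p a :=
  (h.2 a).2 ⟨n, hn⟩

theorem IsStageApprox.eventually {p : α → Prop} {R : α → ℕ → Prop} (h : IsStageApprox p R)
    {a : α} (ha : p a) : ∀ᶠ n in Filter.atTop, R a n := by
  obtain ⟨n, hn⟩ := (h.2 a).1 ha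
  exact Filter.eventually_atTop.2 ⟨n, fun m hm => h.1 a hm hn⟩

theorem _root_.REPred.exists_isStageApprox [Primcodable α] {p : α → Prop} (hp : REPred p) :
    ∃ R : α → ℕ → Prop, PrimrecRel R ∧ IsStageApprox p R := by
  obtain ⟨c, hc⟩ := Code.exists_code.1 hp
  refine ⟨fun a n => (Code.evaln n c (encode a)).isSome = true,
    Primrec.eq.comp (option_isSome.comp (Code.primrec_evaln.comp
      ((snd.pair (const c)).pair (Primrec.encode.comp fst)))) (const true),
    fun a n m hnm hn => ?_, fun a => ?_⟩
  · obtain ⟨x, hx⟩ := Option.isSome_iff_exists.1 hn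
    exact Option.isSome_iff_exists.2 ⟨x, Code.evaln_mono hnm hx⟩
  · have hdom : p a ↔ (Code.eval c (encode a)).Dom := by
      simp only [hc, encodek, Part.coe_some, Part.bind_some, Part.map_Dom]
      exact ⟨fun h => ⟨h, trivial⟩, fun ⟨h, _⟩ => h⟩
    simp only [hdom, Part.dom_iff_mem, Code.evaln_complete, Option.isSome_iff_exists]
    exact ⟨fun ⟨x, n, hx⟩ => ⟨n, x, hx⟩, fun ⟨n, x, hx⟩ => ⟨x, n, hx⟩⟩

theorem _root_.PrimrecRel.rePred_exists [Primcodable α] {R : α → ℕ → Prop}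
    (hR : PrimrecRel R) : REPred fun a => ∃ n, R a n := by
  obtain ⟨_, hR⟩ := hR
  refine (Partrec.rfind hR.to_comp.partrec.to₂).dom_re.of_eq fun a => ?_
  refine Nat.rfind_dom.trans
    ⟨fun ⟨n, hn, _⟩ => ⟨n, ?_⟩, fun ⟨n, hn⟩ => ⟨n, ?_, fun _ => trivial⟩⟩
  · simpa [PFun.lift] using hn
  · simpa [PFun.lift] using hn

end Stages

section Subshifts

variable {k : ℕ} {S : Fin k → G} {A B : Type}

theorem exists_localRule [Finite A] [Nonempty B] (hS : IsGenData S) {X : Set (G → A)}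
    (hX : IsSubshift X) {φ : (G → A) → (G → B)}
    (hcont : letI : TopologicalSpace A := ⊥; letI : TopologicalSpace B := ⊥; ContinuousOn φ X)
    (hequiv : ∀ x ∈ X, ∀ g : G, φ (fun h => x (g⁻¹ * h)) = fun h => φ x (g⁻¹ * h)) :
    ∃ (m : ℕ) (W : Fin m → List (Fin k)) (Φ : (Fin m → A) → B),
      ∀ x ∈ X, ∀ g, φ x g = Φ fun i => x (g * wordEval S (W i)) := by
  let _ : TopologicalSpace A := ⊥
  let _ : TopologicalSpace B := ⊥
  have : DiscreteTopology A := ⟨rfl⟩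
  have : DiscreteTopology B := ⟨rfl⟩
  obtain ⟨F, hF⟩ := hX.1.isCompact.exists_finset_eq_of_continuousOn
    ((continuous_apply 1).comp_continuousOn hcont)
  choose rep hrep using hS.exists_wordEval_eq
  let W : Fin F.card → List (Fin k) := fun i => rep (F.equivFin.symm i)
  let window : X → Fin F.card → A := fun x i => x.1 (wordEval S (W i))
  have hfac : (fun x : X => φ x 1).FactorsThrough window := fun x y hxy =>
    hF x x.2 y y.2 fun g hg => by
      simpa [window, W, hrep] using congrFun hxy (F.equivFin ⟨g, hg⟩)
  refine ⟨F.card, W, Function.extend window (fun x : X => φ x 1) fun _ => Classical.arbitrary B,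
    fun x hx g => ?_⟩
  have hshift : (fun h => x (g * h)) ∈ X := by simpa using hX.2 x hx g⁻¹
  calc φ x g = φ (fun h => x (g * h)) 1 := by simpa using (congrFun (hequiv x hx g⁻¹) 1).symm
    _ = _ := (hfac.extend_apply _ ⟨_, hshift⟩).symm

variable (S) in
def avoidedCodings (Y : Set (G → A)) : Set (PatternCoding k A) :=
  {c | ∀ y ∈ Y, ∃ p ∈ c, y (wordEval S p.1) ≠ p.2}

theorem IsSubshift.eq_XC_avoidedCodings (hS : IsGenData S) {Y : Set (G → A)}
    (hY : IsSubshift Y) : Y = XC S (avoidedCodings S Y) := by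
  ext z
  constructor
  · rintro hz ⟨g, c, hc, hocc⟩
    obtain ⟨p, hp, hne⟩ := hc _ (by simpa using hY.2 z hz g⁻¹)
    exact hne (hocc p hp)
  · intro hz
    by_contra hzY
    let _ : TopologicalSpace A := ⊥
    obtain ⟨F, hF⟩ := hY.1.exists_finset_ne_of_notMem hzY
    choose rep hrep using hS.exists_wordEval_eq
    refine hz ⟨1, F.toList.map fun g => (rep g, z g), fun y hy => ?_, ?_⟩
    · obtain ⟨g, hg, hne⟩ := hF y hy
      refine ⟨(rep g, z g), List.mem_map_of_mem (Finset.mem_toList.2 hg), ?_⟩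
      simpa [hrep] using hne
    · simp [hrep]

theorem effectivelyClosed_empty [Primcodable A] : EffectivelyClosed S (∅ : Set (G → A)) := by
  refine ⟨Set.univ, (Partrec.const' (Part.some ())).dom_re.of_eq fun _ => by simp, ?_⟩
  ext x
  simp only [Set.mem_empty_iff_false, false_iff]
  exact fun h => h ⟨1, [], trivial, by simp⟩

end Subshifts

section Certificate

open Encodable Primrec

variable {k : ℕ} {A B : Type} [Primcodable A] [Primcodable B]

variable (k A) in
/-- Each element assigns a symbol to every word listed by `enumUpTo _ n`. -/
def assignments [Fintype A] (n : ℕ) : List (PatternCoding k A) :=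
  ((enumUpTo (List (Fin k)) n).map fun w => (Finset.univ : Finset A).toList.map (w, ·)).sections

variable (eqAt : List (Fin k) × List (Fin k) → ℕ → Prop)
  (forbAt : PatternCoding k A → ℕ → Prop)
  {m : ℕ} (W : Fin m → List (Fin k)) (Φ : (Fin m → A) → B)

def Admissible (n : ℕ) (t : PatternCoding k A) : Prop :=
  (∀ p ∈ t, ∀ q ∈ t, eqAt (p.1, q.1) n → p.2 = q.2) ∧
    ∀ u ∈ enumUpTo (List (Fin k)) n, ∀ c ∈ enumUpTo (PatternCoding k A) n, forbAt c n →
      ∃ p ∈ c, (u ++ p.1, p.2) ∉ t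

def Refutes (t : PatternCoding k A) (c : PatternCoding k B) : Prop :=
  ∃ p ∈ c, ∃ v : Fin m → A, (∀ i, (p.1 ++ W i, v i) ∈ t) ∧ Φ v ≠ p.2

def Certified [Fintype A] (c : PatternCoding k B) (n : ℕ) : Prop :=
  ∀ t ∈ assignments k A n, Admissible eqAt forbAt n t → Refutes W Φ t c

theorem primrec_assignments [Fintype A] : Primrec (assignments k A) :=
  primrec_sections.comp (list_map primrec_enumUpTo
    (list_map (const _) (pair (snd.comp fst) snd).to₂).to₂)

variable {eqAt forbAt} in
theorem primrecRel_admissible (heqAt : PrimrecRel eqAt) (hforbAt : PrimrecRel forbAt) :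
    PrimrecRel (Admissible eqAt forbAt) := by
  unfold Admissible
  refine PrimrecPred.and (PrimrecPred.forall_mem snd (PrimrecPred.forall_mem (snd.comp fst) ?_))
    (PrimrecPred.forall_mem (primrec_enumUpTo.comp fst)
      (PrimrecPred.forall_mem (primrec_enumUpTo.comp (fst.comp fst)) ?_))
  · exact (heqAt.comp (pair (fst.comp (snd.comp fst)) (fst.comp snd))
      (fst.comp (fst.comp fst))).imp
      (Primrec.eq.comp (snd.comp (snd.comp fst)) (snd.comp snd))
  · exact (hforbAt.comp snd (fst.comp (fst.comp fst))).imp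
      (PrimrecPred.exists_mem snd (PrimrecPred.mem
        (pair (list_append.comp (snd.comp (fst.comp fst)) (fst.comp snd)) (snd.comp snd))
        (snd.comp (fst.comp (fst.comp fst)))).not)

theorem primrecRel_refutes [Fintype A] : PrimrecRel (Refutes (A := A) W Φ) := by
  unfold Refutes
  refine PrimrecPred.exists_mem snd (PrimrecPred.exists_of_finite (PrimrecPred.and
    (PrimrecPred.forall_of_finite ?_) ?_))
  · exact PrimrecPred.mem
      (pair (list_append.comp (fst.comp (snd.comp (fst.comp fst))) ((dom_finite W).comp snd))
        (fin_app.comp (snd.comp fst) snd))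
      (fst.comp (fst.comp (fst.comp fst)))
  · exact (Primrec.eq.comp ((dom_finite Φ).comp snd) (snd.comp (snd.comp fst))).not

variable {eqAt forbAt} in
theorem primrecRel_certified [Fintype A] (heqAt : PrimrecRel eqAt) (hforbAt : PrimrecRel forbAt) :
    PrimrecRel (Certified eqAt forbAt W Φ) := by
  unfold Certified
  exact PrimrecPred.forall_mem (primrec_assignments.comp snd)
    (((primrecRel_admissible heqAt hforbAt).comp (snd.comp fst) snd).imp
      ((primrecRel_refutes W Φ).comp snd (fst.comp fst)))

end Certificate

section Correctness

variable {k : ℕ} {S : Fin k → G} {A B : Type}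

variable (S) in
def restrict (x : G → A) (n : ℕ) : PatternCoding k A :=
  (enumUpTo (List (Fin k)) n).map fun w => (w, x (wordEval S w))

theorem restrict_mem_assignments [Fintype A] (x : G → A) (n : ℕ) :
    restrict S x n ∈ assignments k A n := by
  rw [assignments, List.mem_sections, restrict, List.forall₂_map_left_iff,
    List.forall₂_map_right_iff, List.forall₂_same]
  exact fun w _ => List.mem_map_of_mem (Finset.mem_toList.2 (Finset.mem_univ _))

theorem eq_of_mem_restrict {x : G → A} {n : ℕ} {p : List (Fin k) × A}
    (hp : p ∈ restrict S x n) : p.2 = x (wordEval S p.1) := by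
  obtain ⟨w, -, rfl⟩ := List.mem_map.1 hp
  rfl

theorem exists_mem_of_mem_assignments [Fintype A] {t : PatternCoding k A} {n : ℕ}
    (ht : t ∈ assignments k A n) {w : List (Fin k)} (hw : w ∈ enumUpTo (List (Fin k)) n) :
    ∃ a, (w, a) ∈ t := by
  rw [assignments, List.mem_sections] at ht
  obtain ⟨p, hp, hpw⟩ := ht.exists_mem_of_mem_right (List.mem_map_of_mem hw)
  obtain ⟨a, -, rfl⟩ := List.mem_map.1 hpw
  exact ⟨a, hp⟩

variable [Fintype A] [Primcodable A] {CX : Set (PatternCoding k A)}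
  {eqAt : List (Fin k) × List (Fin k) → ℕ → Prop}
  {forbAt : PatternCoding k A → ℕ → Prop}
  {m : ℕ} {W : Fin m → List (Fin k)} {Φ : (Fin m → A) → B} {φ : (G → A) → (G → B)}

theorem Certified.mem_avoidedCodings
    (heqAt : IsStageApprox (fun p => wordEval S p.1 = wordEval S p.2) eqAt)
    (hforbAt : IsStageApprox (· ∈ CX) forbAt)
    (hΦ : ∀ x ∈ XC S CX, ∀ g, φ x g = Φ fun i => x (g * wordEval S (W i)))
    {c : PatternCoding k B} {n : ℕ} (hc : Certified eqAt forbAt W Φ c n) :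
    c ∈ avoidedCodings S (φ '' XC S CX) := by
  rintro _ ⟨x, hx, rfl⟩
  have hadm : Admissible eqAt forbAt n (restrict S x n) := by
    refine ⟨fun p hp q hq hpq => ?_, fun u _ c' _ hc' => ?_⟩
    · rw [eq_of_mem_restrict hp, eq_of_mem_restrict hq, heqAt.of_stage hpq]
    · by_contra! hocc
      refine hx ⟨wordEval S u, c', hforbAt.of_stage hc', fun p hp => ?_⟩
      rw [eq_of_mem_restrict (hocc p hp), wordEval_append]
  obtain ⟨p, hp, v, hv, hne⟩ := hc _ (restrict_mem_assignments x n) hadm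
  have hv : v = fun i => x (wordEval S p.1 * wordEval S (W i)) := funext fun i => by
    rw [← wordEval_append]
    exact eq_of_mem_restrict (hv i)
  exact ⟨p, hp, by rwa [hΦ x hx, ← hv]⟩

theorem exists_limit_mem_XC (hS : IsGenData S)
    (heqAt : IsStageApprox (fun p => wordEval S p.1 = wordEval S p.2) eqAt)
    (hforbAt : IsStageApprox (· ∈ CX) forbAt) {t : ℕ → PatternCoding k A}
    (ht : ∀ n, t n ∈ assignments k A n) (hadm : ∀ n, Admissible eqAt forbAt n (t n)) :
    ∃ (U : Ultrafilter ℕ) (x : G → A), x ∈ XC S CX ∧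
      ∀ w, ∀ᶠ n in U, (w, x (wordEval S w)) ∈ t n := by
  set U := Ultrafilter.of (Filter.atTop : Filter ℕ)
  have hU {P : ℕ → Prop} (h : ∀ᶠ n in Filter.atTop, P n) : ∀ᶠ n in U, P n :=
    Ultrafilter.of_le _ h
  have htot (w : List (Fin k)) : ∀ᶠ n in U, ∃ a, (w, a) ∈ t n :=
    hU ((eventually_mem_enumUpTo w).mono fun n hw => exists_mem_of_mem_assignments (ht n) hw)
  choose f hf using fun w => Ultrafilter.eventually_exists_iff.1 (htot w)
  have hcons (v w : List (Fin k)) (hvw : wordEval S v = wordEval S w) : f v = f w := by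
    obtain ⟨n, hv, hw, hn⟩ :=
      ((hf v).and ((hf w).and (hU (heqAt.eventually (a := (v, w)) hvw)))).exists
    exact (hadm n).1 _ hv _ hw hn
  choose rep hrep using hS.exists_wordEval_eq
  have hx (w : List (Fin k)) : f (rep (wordEval S w)) = f w := hcons _ _ (hrep _)
  refine ⟨U, fun g => f (rep g), ?_, fun w => by simpa only [hx] using hf w⟩
  rintro ⟨g, c, hc, hocc : ∀ p ∈ c, f (rep (g * wordEval S p.1)) = p.2⟩
  have hall : ∀ᶠ n in U, ∀ p ∈ c, (rep g ++ p.1, p.2) ∈ t n := by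
    refine (Filter.eventually_all_finite c.finite_toSet).2 fun p hp =>
      (hf (rep g ++ p.1)).mono fun n hn => ?_
    rwa [← hx, wordEval_append, hrep, hocc p hp] at hn
  obtain ⟨n, hn, hu, hcn, hforb⟩ := (hall.and ((hU (eventually_mem_enumUpTo (rep g))).and
    ((hU (eventually_mem_enumUpTo c)).and (hU (hforbAt.eventually hc))))).exists
  obtain ⟨p, hp, hpn⟩ := (hadm n).2 _ hu _ hcn hforb
  exact hpn (hn p hp)

theorem exists_certified (hS : IsGenData S)
    (heqAt : IsStageApprox (fun p => wordEval S p.1 = wordEval S p.2) eqAt)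
    (hforbAt : IsStageApprox (· ∈ CX) forbAt)
    (hΦ : ∀ x ∈ XC S CX, ∀ g, φ x g = Φ fun i => x (g * wordEval S (W i)))
    {c : PatternCoding k B} (hc : c ∈ avoidedCodings S (φ '' XC S CX)) :
    ∃ n, Certified eqAt forbAt W Φ c n := by
  by_contra! hnot
  simp only [Certified, not_forall] at hnot
  choose t ht hadm hnref using hnot
  obtain ⟨U, x, hx, hxt⟩ := exists_limit_mem_XC hS heqAt hforbAt ht hadm
  obtain ⟨p, hp, hne⟩ := hc _ ⟨x, hx, rfl⟩
  obtain ⟨n, hn⟩ := (Filter.eventually_all.2 fun i => hxt (p.1 ++ W i)).exists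
  refine hnref n ⟨p, hp, _, hn, ?_⟩
  simpa only [hΦ x hx, wordEval_append] using hne

end Correctness

theorem EffectivelyClosed.rePred_avoidedCodings_image {k : ℕ} {S : Fin k → G} {A B : Type}
    [Fintype A] [Primcodable A] [Primcodable B] [Nonempty B] (hS : IsGenData S)
    (hWP : REPred (· ∈ WP S)) {X : Set (G → A)} (hXsub : IsSubshift X)
    (hX : EffectivelyClosed S X) {φ : (G → A) → (G → B)}
    (hcont : letI : TopologicalSpace A := ⊥; letI : TopologicalSpace B := ⊥; ContinuousOn φ X)
    (hequiv : ∀ x ∈ X, ∀ g : G, φ (fun h => x (g⁻¹ * h)) = fun h => φ x (g⁻¹ * h)) :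
    REPred (· ∈ avoidedCodings S (φ '' X)) := by
  obtain ⟨CX, hCX, rfl⟩ := hX
  obtain ⟨m, W, Φ, hΦ⟩ := exists_localRule hS hXsub hcont hequiv
  obtain ⟨eqAt, heqAt_prim, heqAt⟩ := (hS.rePred_wordEval_eq hWP).exists_isStageApprox
  obtain ⟨forbAt, hforbAt_prim, hforbAt⟩ := hCX.exists_isStageApprox
  exact (primrecRel_certified W Φ heqAt_prim hforbAt_prim).rePred_exists.of_eq fun c =>
    ⟨fun ⟨_, hc⟩ => hc.mem_avoidedCodings heqAt hforbAt hΦ,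
      exists_certified hS heqAt hforbAt hΦ⟩

theorem effectivelyClosed_factor_general
    {G : Type} [Group G] {k : ℕ} (S : Fin k → G) (hS : IsGenData S)
    (hWP : REPred (· ∈ WP S))
    {A B : Type} [Fintype A] [Primcodable A] [Primcodable B]
    (X : Set (G → A)) (Y : Set (G → B)) (φ : (G → A) → (G → B))
    (hsubX : IsSubshift X) (hsubY : IsSubshift Y)
    (hX : EffectivelyClosed S X) (hφ : FactorCode X Y φ) :
    EffectivelyClosed S Y := by
  obtain ⟨hcont, hequiv, rfl⟩ := hφ
  cases isEmpty_or_nonempty B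
  · rw [Set.eq_empty_of_isEmpty (φ '' X)]
    exact effectivelyClosed_empty
  · exact ⟨_, hX.rePred_avoidedCodings_image hS hWP hsubX hcont hequiv,
      hsubY.eq_XC_avoidedCodings hS⟩

/-- Over a recursively presented group, the factor of an effectively closed
subshift under a factor code is effectively closed. -/
theorem effectivelyClosed_factor
    {G : Type} [Group G] {k : ℕ} (S : Fin k → G) (hS : IsGenData S)
    (hWP : REPred (· ∈ WP S))
    {A B : Type} [Fintype A] [Primcodable A] [Fintype B] [Primcodable B]
    (X : Set (G → A)) (Y : Set (G → B)) (φ : (G → A) → (G → B))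
    (hsubX : IsSubshift X) (hsubY : IsSubshift Y)
    (hX : EffectivelyClosed S X) (hφ : FactorCode X Y φ) :
    EffectivelyClosed S Y :=
  effectivelyClosed_factor_general S hS hWP X Y φ hsubX hsubY hX hφ

end SDG
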